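/- arXiv:2307.12743 — 7 statements merged into one kernel-verified Lean document; each statement's English description precedes it below -/
import Mathlib

section
/- The Beltrami–Klein distance dominates the Euclidean distance: for all x, y in the open unit ball of ℝ^d, d_K(x,y) ≥ ‖x − y‖. -/
open scoped RealInnerProductSpace
open Metric MeasureTheory

/-- Inverse hyperbolic cosine. -/
noncomputable def arccosh (x : ℝ) : ℝ := Real.log (x + Real.sqrt (x ^ 2 - 1))

/-- Inverse hyperbolic tangent. -/
noncomputable def arctanh (x : ℝ) : ℝ := Real.log ((1 + x) / (1 - x)) / 2

/-- The Beltrami–Klein distance on the open unit ball of `ℝ^d`. -/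
noncomputable def kleinDist {d : ℕ} (x y : EuclideanSpace ℝ (Fin d)) : ℝ :=
  arccosh ((1 - ⟪x, y⟫) / (Real.sqrt (1 - ‖x‖ ^ 2) * Real.sqrt (1 - ‖y‖ ^ 2)))

/-!
Write `r = ‖x - y‖`, `u = √(1 - ‖x‖²)`, `v = √(1 - ‖y‖²)`. The claim is `u v cosh r ≤ 1 - ⟪x, y⟫`,
and the polarization identity turns the right-hand side into `(u² + v²) / 2 + r² / 2`. Since
`uv ≤ (u² + v²) / 2` and also `uv ≤ 1 - r² / 4` (because `r ≤ ‖x‖ + ‖y‖`), it suffices that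
`(1 - r² / 4) (cosh r - 1) ≤ r² / 2`. With `cosh r ≤ exp (r² / 2)` this reduces to the
Padé-type bound `(2 - w) exp w ≤ 2 + w` for `w ≥ 0`.
-/

namespace Real

lemma two_sub_mul_exp_le {w : ℝ} (hw : 0 ≤ w) : (2 - w) * exp w ≤ 2 + w := by
  let f : ℝ → ℝ := fun w => 2 + w - (2 - w) * exp w
  have hf : ∀ w, HasDerivAt f (1 - (1 - w) * exp w) w := fun w =>
    (((hasDerivAt_id' w).const_add 2).sub
      (((hasDerivAt_id' w).const_sub 2).mul (hasDerivAt_exp w))).congr_deriv (by ring)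
  -- `(1 - w) exp w ≤ exp (-w) exp w = 1`
  have hf' : ∀ w, 0 ≤ deriv f w := fun w => by
    have h := mul_le_mul_of_nonneg_right (add_one_le_exp (-w)) (exp_pos w).le
    rw [← exp_add, neg_add_cancel, exp_zero] at h
    rw [(hf w).deriv]
    linarith
  have := monotone_of_deriv_nonneg (fun w => (hf w).differentiableAt) hf' hw
  simp only [f, sub_zero, exp_zero, mul_one, add_zero, sub_self] at this
  linarith

lemma one_sub_sq_div_four_mul_cosh_sub_one_le (r : ℝ) :
    (1 - r ^ 2 / 4) * (cosh r - 1) ≤ r ^ 2 / 2 := by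
  have hcosh : 0 ≤ cosh r - 1 := sub_nonneg.2 (one_le_cosh r)
  rcases le_or_gt (r ^ 2) 4 with hr | hr
  · have hexp := two_sub_mul_exp_le (w := r ^ 2 / 2) (by positivity)
    calc (1 - r ^ 2 / 4) * (cosh r - 1)
        ≤ (1 - r ^ 2 / 4) * (exp (r ^ 2 / 2) - 1) := by
          gcongr
          · linarith
          · exact cosh_le_exp_half_sq r
      _ ≤ r ^ 2 / 2 := by linarith
  · nlinarith

end Real

open Real

lemma arccosh_eq_arcosh : arccosh = arcosh := rfl

lemma le_arccosh_of_cosh_le {r t : ℝ} (hr : 0 ≤ r) (h : cosh r ≤ t) : r ≤ arccosh t := by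
  rw [arccosh_eq_arcosh, ← arcosh_cosh hr]
  exact (arcosh_le_arcosh (cosh_pos r) ((cosh_pos r).trans_le h)).2 h

lemma sqrt_one_sub_sq_mul_sqrt_one_sub_sq_mul_cosh_le {E : Type*} [NormedAddCommGroup E]
    [InnerProductSpace ℝ E] {x y : E} (hx : ‖x‖ ≤ 1) (hy : ‖y‖ ≤ 1) :
    √(1 - ‖x‖ ^ 2) * √(1 - ‖y‖ ^ 2) * cosh ‖x - y‖ ≤ 1 - ⟪x, y⟫ := by
  set r := ‖x - y‖
  set u := √(1 - ‖x‖ ^ 2)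
  set v := √(1 - ‖y‖ ^ 2)
  have hu : u ^ 2 = 1 - ‖x‖ ^ 2 := sq_sqrt (by nlinarith [norm_nonneg x])
  have hv : v ^ 2 = 1 - ‖y‖ ^ 2 := sq_sqrt (by nlinarith [norm_nonneg y])
  have huv_am_gm : u * v ≤ (u ^ 2 + v ^ 2) / 2 := by nlinarith [sq_nonneg (u - v)]
  have hr : r ^ 2 ≤ 2 * (‖x‖ ^ 2 + ‖y‖ ^ 2) := by
    have := norm_sub_le x y
    nlinarith [norm_nonneg (x - y), sq_nonneg (‖x‖ - ‖y‖)]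
  have huv_le : u * v ≤ 1 - r ^ 2 / 4 := by linarith
  have hcosh : u * v * (cosh r - 1) ≤ r ^ 2 / 2 :=
    (mul_le_mul_of_nonneg_right huv_le (sub_nonneg.2 (one_le_cosh r))).trans
      (one_sub_sq_div_four_mul_cosh_sub_one_le r)
  have hpolar : r ^ 2 = ‖x‖ ^ 2 - 2 * ⟪x, y⟫ + ‖y‖ ^ 2 := norm_sub_sq_real x y
  calc u * v * cosh r = u * v + u * v * (cosh r - 1) := by ring
    _ ≤ (u ^ 2 + v ^ 2) / 2 + r ^ 2 / 2 := add_le_add huv_am_gm hcosh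
    _ = 1 - ⟪x, y⟫ := by rw [hu, hv, hpolar]; ring

theorem klein_dist_ge_euclidean {d : ℕ} (x y : EuclideanSpace ℝ (Fin d))
    (hx : x ∈ ball (0 : EuclideanSpace ℝ (Fin d)) 1)
    (hy : y ∈ ball (0 : EuclideanSpace ℝ (Fin d)) 1) :
    ‖x - y‖ ≤ kleinDist x y := by
  rw [mem_ball_zero_iff] at hx hy
  have hpos : 0 < √(1 - ‖x‖ ^ 2) * √(1 - ‖y‖ ^ 2) := by
    apply mul_pos <;> apply sqrt_pos.2 <;> nlinarith [norm_nonneg x, norm_nonneg y]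
  refine le_arccosh_of_cosh_le (norm_nonneg _) ((le_div_iff₀' hpos).2 ?_)
  exact sqrt_one_sub_sq_mul_sqrt_one_sub_sq_mul_cosh_le hx.le hy.le
end

section
/- Bounded distortion of the Klein model on small balls: for every ρ ∈ (0,1) and all x, y in the closed Euclidean ball of radius ρ centered at the origin in ℝ^d, d_K(x,y) ≤ ‖x − y‖ / (1 − ρ²). -/
/-!
With `t = (1 - ⟪x, y⟫) / (√(1 - ‖x‖²) √(1 - ‖y‖²))` one has `arccosh t ≤ √(t² - 1)`, and
`(1 - ⟪x, y⟫)² - (1 - ‖x‖²)(1 - ‖y‖²) = ‖x - y‖² + ⟪x, y⟫² - ‖x‖²‖y‖² ≤ ‖x - y‖²` by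
Cauchy–Schwarz, so `d_K(x, y) ≤ ‖x - y‖ / (√(1 - ‖x‖²) √(1 - ‖y‖²))`. On the ball of radius `ρ`
the denominator is at least `1 - ρ²`.
-/

open scoped RealInnerProductSpace
open Metric MeasureTheory

theorem arccosh_le_sqrt_sq_sub_one {t : ℝ} (ht : 1 ≤ t) : arccosh t ≤ √(t ^ 2 - 1) := by
  have hu := Real.sqrt_nonneg (t ^ 2 - 1)
  have hu2 : √(t ^ 2 - 1) ^ 2 = t ^ 2 - 1 := Real.sq_sqrt (by nlinarith)
  -- with `u = √(t² - 1)`: `t ≤ (t² + 1) / 2 = 1 + u² / 2`, so `t + u ≤ 1 + u + u² / 2 ≤ exp u`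
  have h : t + √(t ^ 2 - 1) ≤ Real.exp √(t ^ 2 - 1) := by
    nlinarith [Real.quadratic_le_exp_of_nonneg hu, sq_nonneg (t - 1)]
  calc arccosh t ≤ Real.log (Real.exp √(t ^ 2 - 1)) := Real.log_le_log (by positivity) h
    _ = √(t ^ 2 - 1) := Real.log_exp _

theorem arccosh_div_le_of_sq_sub_sq_le {a b c : ℝ} (hb : 0 < b) (hba : b ≤ a) (hc : 0 ≤ c)
    (h : a ^ 2 - b ^ 2 ≤ c ^ 2) : arccosh (a / b) ≤ c / b := by
  refine (arccosh_le_sqrt_sq_sub_one ((one_le_div hb).2 hba)).trans ?_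
  refine Real.sqrt_le_iff.2 ⟨by positivity, ?_⟩
  rw [div_pow, div_pow, div_sub_one (by positivity)]
  gcongr

section InnerProductSpace

variable {F : Type*} [NormedAddCommGroup F] [InnerProductSpace ℝ F]

theorem sq_one_sub_inner_sub_mul_le (x y : F) :
    (1 - ⟪x, y⟫) ^ 2 - (1 - ‖x‖ ^ 2) * (1 - ‖y‖ ^ 2) ≤ ‖x - y‖ ^ 2 := by
  have hcs : ⟪x, y⟫ ^ 2 ≤ (‖x‖ * ‖y‖) ^ 2 :=
    sq_le_sq' (abs_le.1 (abs_real_inner_le_norm x y)).1 (real_inner_le_norm x y)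
  rw [norm_sub_sq_real]
  linear_combination hcs

theorem sqrt_mul_sqrt_le_one_sub_inner {x y : F} (hx : ‖x‖ ≤ 1) (hy : ‖y‖ ≤ 1) :
    √(1 - ‖x‖ ^ 2) * √(1 - ‖y‖ ^ 2) ≤ 1 - ⟪x, y⟫ := by
  have hx2 : √(1 - ‖x‖ ^ 2) ^ 2 = 1 - ‖x‖ ^ 2 := Real.sq_sqrt (by nlinarith [norm_nonneg x])
  have hy2 : √(1 - ‖y‖ ^ 2) ^ 2 = 1 - ‖y‖ ^ 2 := Real.sq_sqrt (by nlinarith [norm_nonneg y])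
  have hxy : 0 ≤ ‖x - y‖ ^ 2 := sq_nonneg _
  rw [norm_sub_sq_real] at hxy
  -- AM–GM on the square roots, and `2 ⟪x, y⟫ ≤ ‖x‖² + ‖y‖²`
  nlinarith [two_mul_le_add_sq √(1 - ‖x‖ ^ 2) √(1 - ‖y‖ ^ 2)]

end InnerProductSpace

theorem kleinDist_le_norm_sub_div {d : ℕ} {x y : EuclideanSpace ℝ (Fin d)} (hx : ‖x‖ < 1)
    (hy : ‖y‖ < 1) : kleinDist x y ≤ ‖x - y‖ / (√(1 - ‖x‖ ^ 2) * √(1 - ‖y‖ ^ 2)) := by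
  have hpos : 0 < √(1 - ‖x‖ ^ 2) * √(1 - ‖y‖ ^ 2) := by
    have := norm_nonneg x; have := norm_nonneg y
    apply mul_pos <;> apply Real.sqrt_pos.2 <;> nlinarith
  refine arccosh_div_le_of_sq_sub_sq_le hpos (sqrt_mul_sqrt_le_one_sub_inner hx.le hy.le)
    (norm_nonneg _) ?_
  rw [mul_pow, Real.sq_sqrt, Real.sq_sqrt]
  · exact sq_one_sub_inner_sub_mul_le x y
  all_goals nlinarith [norm_nonneg x, norm_nonneg y]

theorem one_sub_sq_le_sqrt_mul_sqrt {ρ a b : ℝ} (hρ : ρ ≤ 1) (ha₀ : 0 ≤ a) (ha : a ≤ ρ)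
    (hb₀ : 0 ≤ b) (hb : b ≤ ρ) : 1 - ρ ^ 2 ≤ √(1 - a ^ 2) * √(1 - b ^ 2) := by
  have hρ2 : 0 ≤ 1 - ρ ^ 2 := by nlinarith
  calc 1 - ρ ^ 2 = √(1 - ρ ^ 2) * √(1 - ρ ^ 2) := (Real.mul_self_sqrt hρ2).symm
    _ ≤ √(1 - a ^ 2) * √(1 - b ^ 2) := by gcongr

theorem klein_dist_bounded_distortion_general {d : ℕ} (ρ : ℝ) (hρ1 : ρ < 1)
    (x y : EuclideanSpace ℝ (Fin d))
    (hx : x ∈ closedBall (0 : EuclideanSpace ℝ (Fin d)) ρ)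
    (hy : y ∈ closedBall (0 : EuclideanSpace ℝ (Fin d)) ρ) :
    kleinDist x y ≤ ‖x - y‖ / (1 - ρ ^ 2) := by
  rw [mem_closedBall_zero_iff] at hx hy
  have hρ : 0 < 1 - ρ ^ 2 := by nlinarith [norm_nonneg x]
  calc kleinDist x y ≤ ‖x - y‖ / (√(1 - ‖x‖ ^ 2) * √(1 - ‖y‖ ^ 2)) :=
        kleinDist_le_norm_sub_div (hx.trans_lt hρ1) (hy.trans_lt hρ1)
    _ ≤ ‖x - y‖ / (1 - ρ ^ 2) := by
      gcongr
      exact one_sub_sq_le_sqrt_mul_sqrt hρ1.le (norm_nonneg x) hx (norm_nonneg y) hy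

theorem klein_dist_bounded_distortion {d : ℕ} (ρ : ℝ) (hρ0 : 0 < ρ) (hρ1 : ρ < 1)
    (x y : EuclideanSpace ℝ (Fin d))
    (hx : x ∈ closedBall (0 : EuclideanSpace ℝ (Fin d)) ρ)
    (hy : y ∈ closedBall (0 : EuclideanSpace ℝ (Fin d)) ρ) :
    kleinDist x y ≤ ‖x - y‖ / (1 - ρ ^ 2) :=
  klein_dist_bounded_distortion_general ρ hρ1 x y hx hy
end

section
/- Volume of the ellipsoid-method update ellipsoid: let d ≥ 2, let g ∈ ℝ^d be a unit vector, and define E' = {x ∈ ℝ^d : ((d+1)²/d²)·(⟨g,x⟩ + 1/(d+1))² + ((d²−1)/d²)·(‖x‖² − ⟨g,x⟩²) ≤ 1}. Then the Lebesgue volume of E' equals (d/(d+1))·(d²/(d²−1))^((d−1)/2) times the Lebesgue volume of the closed unit ball of ℝ^d. -/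
/-!
`E'` is the preimage of the closed unit ball under `x ↦ M (x + g / (d + 1))`, where `M` scales by
`(d + 1) / d` along `g` and by `√((d² - 1) / d²)` on `g⊥`: the defining quadratic form is exactly
`‖M (x + g / (d + 1))‖²`. Translations preserve volume, so `vol E' = |det M|⁻¹ · vol B`, and in an
orthonormal basis containing `g` the map `M` is diagonal, whence
`det M = (d + 1) / d · √((d² - 1) / d²) ^ (d - 1)`.
-/

open scoped RealInnerProductSpace
open Metric MeasureTheory

theorem LinearMap.det_eq_prod_of_apply_basis {ι R M : Type*} [Fintype ι] [DecidableEq ι]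
    [CommRing R] [AddCommGroup M] [Module R M] (v : Module.Basis ι R M) (f : M →ₗ[R] M)
    (c : ι → R) (hf : ∀ i, f (v i) = c i • v i) :
    LinearMap.det f = ∏ i, c i := by
  have : f = Matrix.toLin v v (Matrix.diagonal c) :=
    v.ext fun i => by simp [Matrix.toLin_self, hf, Matrix.diagonal_apply, ite_smul]
  rw [this, LinearMap.det_toLin, Matrix.det_diagonal]

section ScaleAlong

variable {E : Type*} [NormedAddCommGroup E] [InnerProductSpace ℝ E]

noncomputable def scaleAlong (g : E) (a b : ℝ) : E →ₗ[ℝ] E :=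
  b • LinearMap.id + (a - b) • (innerₗ E g).smulRight g

variable {g : E} {a b : ℝ}

theorem scaleAlong_apply (x : E) :
    scaleAlong g a b x = b • x + ((a - b) * ⟪g, x⟫) • g := by
  simp [scaleAlong, smul_smul]

theorem scaleAlong_self (hg : ‖g‖ = 1) : scaleAlong g a b g = a • g := by
  rw [scaleAlong_apply, real_inner_self_eq_norm_sq, hg]
  module

theorem scaleAlong_of_inner_eq_zero {x : E} (hx : ⟪g, x⟫ = 0) : scaleAlong g a b x = b • x := by
  simp [scaleAlong_apply, hx]

theorem norm_scaleAlong_sq (hg : ‖g‖ = 1) (x : E) :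
    ‖scaleAlong g a b x‖ ^ 2 = a ^ 2 * ⟪g, x⟫ ^ 2 + b ^ 2 * (‖x‖ ^ 2 - ⟪g, x⟫ ^ 2) := by
  rw [scaleAlong_apply, norm_add_sq_real, norm_smul, norm_smul, real_inner_smul_left,
    real_inner_smul_right, real_inner_comm, hg, mul_pow, mul_pow, Real.norm_eq_abs,
    Real.norm_eq_abs, sq_abs, sq_abs]
  ring

theorem det_scaleAlong [FiniteDimensional ℝ E] (hg : ‖g‖ = 1) :
    LinearMap.det (scaleAlong g a b) = a * b ^ (Module.finrank ℝ E - 1) := by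
  classical
  have hon : Orthonormal ℝ ((↑) : ({g} : Set E) → E) :=
    orthonormal_subsingleton_iff.2 fun ⟨_, rfl⟩ => hg
  obtain ⟨u, B, hsub, hB⟩ := hon.exists_orthonormalBasis_extension
  have hgu : g ∈ u := hsub rfl
  have hdet := LinearMap.det_eq_prod_of_apply_basis B.toBasis (scaleAlong g a b)
    (fun v => if (v : E) = g then a else b) fun v => by
      rw [OrthonormalBasis.coe_toBasis, hB]
      split_ifs with hv
      · rw [hv, scaleAlong_self hg]
      · refine scaleAlong_of_inner_eq_zero ?_
        simpa [hB] using
          B.orthonormal.2 (i := ⟨g, hgu⟩) (j := v) (Subtype.coe_ne_coe.1 (Ne.symm hv))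
  rw [hdet, Module.finrank_eq_card_basis B.toBasis, Fintype.card_coe,
    Finset.prod_coe_sort u (fun v => if v = g then a else b), ← Finset.mul_prod_erase u _ hgu,
    if_pos rfl, Finset.prod_congr rfl fun v hv => if_neg (Finset.ne_of_mem_erase hv),
    Finset.prod_const, Finset.card_erase_of_mem hgu]

theorem norm_sq_sub_inner_sq_add_smul (hg : ‖g‖ = 1) (x : E) (t : ℝ) :
    ‖x + t • g‖ ^ 2 - ⟪g, x + t • g⟫ ^ 2 = ‖x‖ ^ 2 - ⟪g, x⟫ ^ 2 := by
  rw [norm_add_sq_real, norm_smul, inner_add_right, real_inner_smul_right, real_inner_smul_right,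
    real_inner_self_eq_norm_sq, real_inner_comm, hg, Real.norm_eq_abs, mul_pow, sq_abs]
  ring

end ScaleAlong

theorem update_ellipsoid_volume {d : ℕ} (hd : 2 ≤ d)
    (g : EuclideanSpace ℝ (Fin d)) (hg : ‖g‖ = 1) :
    volume {x : EuclideanSpace ℝ (Fin d) |
        ((d + 1 : ℝ) ^ 2 / (d : ℝ) ^ 2) * (⟪g, x⟫ + 1 / (d + 1 : ℝ)) ^ 2 +
          (((d : ℝ) ^ 2 - 1) / (d : ℝ) ^ 2) * (‖x‖ ^ 2 - ⟪g, x⟫ ^ 2) ≤ 1}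
      = ENNReal.ofReal
          (((d : ℝ) / (d + 1)) * ((d : ℝ) ^ 2 / ((d : ℝ) ^ 2 - 1)) ^ (((d : ℝ) - 1) / 2)) *
        volume (closedBall (0 : EuclideanSpace ℝ (Fin d)) 1) := by
  have hd1 : (1 : ℝ) < d := by exact_mod_cast hd
  have hd2 : 0 < (d : ℝ) ^ 2 - 1 := by nlinarith
  have ht : 0 < ((d : ℝ) ^ 2 - 1) / (d : ℝ) ^ 2 := div_pos hd2 (by positivity)
  set a : ℝ := ((d : ℝ) + 1) / d
  set b : ℝ := √(((d : ℝ) ^ 2 - 1) / (d : ℝ) ^ 2)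
  have hb : 0 < b := Real.sqrt_pos.2 ht
  have hset : {x : EuclideanSpace ℝ (Fin d) |
        ((d + 1 : ℝ) ^ 2 / (d : ℝ) ^ 2) * (⟪g, x⟫ + 1 / (d + 1 : ℝ)) ^ 2 +
          (((d : ℝ) ^ 2 - 1) / (d : ℝ) ^ 2) * (‖x‖ ^ 2 - ⟪g, x⟫ ^ 2) ≤ 1}
      = (· + (1 / (d + 1 : ℝ)) • g) ⁻¹' (scaleAlong g a b ⁻¹' closedBall 0 1) := by
    ext x
    rw [Set.mem_preimage, Set.mem_preimage, mem_closedBall_zero_iff,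
      ← sq_le_one_iff₀ (norm_nonneg _), norm_scaleAlong_sq hg, norm_sq_sub_inner_sq_add_smul hg,
      inner_add_right, real_inner_smul_right, real_inner_self_eq_norm_sq, hg, div_pow,
      Real.sq_sqrt ht.le]
    simp
  have hdet : LinearMap.det (scaleAlong g a b) = a * b ^ (d - 1) := by
    rw [det_scaleAlong hg, finrank_euclideanSpace_fin]
  rw [hset, measure_preimage_add_right,
    Measure.addHaar_preimage_linearMap _ (by rw [hdet]; positivity), hdet]
  congr 2
  rw [abs_of_pos (by positivity), mul_inv, inv_div, ← inv_pow, ← Real.sqrt_inv, inv_div,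
    Real.rpow_div_two_eq_sqrt _ (div_pos (by positivity) hd2).le, ← Nat.cast_one,
    ← Nat.cast_sub (by omega), Real.rpow_natCast]
end

section
/- General ellipsoid-method step: let d ≥ 2, let E ⊂ ℝ^d be an ellipsoid, i.e., E = c + T(B̄(0,1)) for some c ∈ ℝ^d and invertible linear map T : ℝ^d → ℝ^d, and let H = {x ∈ ℝ^d : ⟨g, x − c⟩ ≤ 0} be a halfspace whose boundary passes through the center c, where g ≠ 0. Then there exists an ellipsoid E' (an image c' + T'(B̄(0,1)) with T' invertible linear) such that E ∩ H ⊆ E' and the Lebesgue volume of E' is at most exp(−1/(2(d+1))) times the Lebesgue volume of E. -/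
/-!
After the affine change of variables `v ↦ c + T v` the set to cover is the half ball
`{v | ‖v‖ ≤ 1, ⟪a, v⟫ ≤ 0}`, where `a` is the unit vector along `T* g`. The half ball lies in the
ellipsoid with centre `-a / (d + 1)`, semi-axis `d / (d + 1)` along `a` and `d / √(d² - 1)` in the
directions orthogonal to `a`. Affine maps multiply all volumes by the same factor `|det T|`, so the
volume ratio is `d / (d + 1) · (d / √(d² - 1)) ^ (d - 1)`, which `1 + x ≤ exp x` bounds by
`exp (-1 / (2 (d + 1)))`.
-/

open scoped RealInnerProductSpace
open Metric MeasureTheory Module Pointwise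

section Stretch

variable {E : Type*} [NormedAddCommGroup E] [InnerProductSpace ℝ E]

noncomputable def stretchAlong (a : E) (α β : ℝ) : E →ₗ[ℝ] E :=
  α • LinearMap.id + (β - α) • (innerₛₗ ℝ a).smulRight a

theorem stretchAlong_apply (a : E) (α β : ℝ) (v : E) :
    stretchAlong a α β v = α • v + ((β - α) * ⟪a, v⟫) • a := by
  simp [stretchAlong, mul_smul]

theorem stretchAlong_of_inner_eq_zero (a : E) (α β : ℝ) {p : E} (hp : ⟪a, p⟫ = 0) :
    stretchAlong a α β p = α • p := by
  simp [stretchAlong_apply, hp]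

theorem stretchAlong_self {a : E} (ha : ‖a‖ = 1) (α β : ℝ) : stretchAlong a α β a = β • a := by
  rw [stretchAlong_apply, real_inner_self_eq_norm_sq, ha]
  module

theorem norm_smul_add_sq_of_inner_eq_zero {a p : E} (ha : ‖a‖ = 1) (hp : ⟪a, p⟫ = 0) (x : ℝ) :
    ‖x • a + p‖ ^ 2 = x ^ 2 + ‖p‖ ^ 2 := by
  rw [norm_add_sq_real, real_inner_smul_left, hp, norm_smul, ha]
  simp

theorem det_stretchAlong [FiniteDimensional ℝ E] {n : ℕ} (hn : finrank ℝ E = n + 1) {a : E}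
    (ha : ‖a‖ = 1) (α β : ℝ) : LinearMap.det (stretchAlong a α β) = β * α ^ n := by
  have hsingle : Orthonormal ℝ (({0} : Set (Fin (n + 1))).domRestrict fun _ ↦ a) :=
    ⟨fun _ ↦ ha, fun i j hij ↦ absurd (Subsingleton.elim i j) hij⟩
  obtain ⟨b, hb⟩ := hsingle.exists_orthonormalBasis_extension_of_card_eq (by simpa using hn)
  have hb0 : b 0 = a := hb 0 rfl
  have hb_eigen : ∀ j, stretchAlong a α β (b j) = (Fin.cons β fun _ ↦ α : Fin (n + 1) → ℝ) j • b j
    | 0 => by simpa [hb0] using stretchAlong_self ha α β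
    | ⟨_ + 1, _⟩ => by
      refine stretchAlong_of_inner_eq_zero a α β ?_
      rw [← hb0]
      exact b.orthonormal.2 (Fin.ne_of_val_ne (by simp))
  have hdiag : LinearMap.toMatrix b.toBasis b.toBasis (stretchAlong a α β) =
      Matrix.diagonal (Fin.cons β fun _ ↦ α) := by
    ext i j
    rw [LinearMap.toMatrix_apply, b.coe_toBasis, hb_eigen, map_smul, ← b.coe_toBasis,
      b.toBasis.repr_self, Matrix.diagonal_apply]
    by_cases h : i = j <;> simp [h]
  rw [← LinearMap.det_toMatrix b.toBasis, hdiag, Matrix.det_diagonal, Fin.prod_univ_succ]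
  simp

theorem halfBall_subset_image_stretchAlong {a : E} (ha : ‖a‖ = 1) {d : ℝ} (hd : 1 < d) :
    closedBall (0 : E) 1 ∩ {v | ⟪a, v⟫ ≤ 0} ⊆
      (fun w ↦ (-(d + 1)⁻¹) • a + stretchAlong a (d / √(d ^ 2 - 1)) (d / (d + 1)) w) ''
        closedBall 0 1 := by
  rintro v ⟨hv, hva : ⟪a, v⟫ ≤ 0⟩
  set s := ⟪a, v⟫
  set p := v - s • a
  have hp : ⟪a, p⟫ = 0 := by
    rw [inner_sub_right, real_inner_smul_right, real_inner_self_eq_norm_sq, ha]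
    ring
  have hv_decomp : v = s • a + p := by simp [p]
  have hd2 : 0 < d ^ 2 - 1 := by nlinarith
  set α := d / √(d ^ 2 - 1)
  set β := d / (d + 1) with hβ_def
  have hα : α ≠ 0 := by positivity
  have hβ : β ≠ 0 := by positivity
  refine ⟨((s + (d + 1)⁻¹) / β) • a + α⁻¹ • p, ?_, ?_⟩
  · have hp' : ⟪a, α⁻¹ • p⟫ = 0 := by rw [real_inner_smul_right, hp, mul_zero]
    have hnorm_v : s ^ 2 + ‖p‖ ^ 2 ≤ 1 := by
      rw [← norm_smul_add_sq_of_inner_eq_zero ha hp, ← hv_decomp]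
      simpa using hv
    have hα_inv_sq : α⁻¹ ^ 2 = (d ^ 2 - 1) / d ^ 2 := by
      rw [inv_pow, div_pow, Real.sq_sqrt hd2.le, inv_div]
    -- the slack is `2 (d + 1) s (s + 1) / d ^ 2`, nonpositive since `-1 ≤ s ≤ 0`
    have hkey : ((s + (d + 1)⁻¹) / β) ^ 2 + α⁻¹ ^ 2 * (1 - s ^ 2) =
        1 + 2 * (d + 1) * (s * (s + 1)) / d ^ 2 := by
      rw [hα_inv_sq, hβ_def]
      field_simp
      ring
    have hslack : 2 * (d + 1) * (s * (s + 1)) / d ^ 2 ≤ 0 := by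
      have hs : -1 ≤ s := by nlinarith [sq_nonneg ‖p‖]
      have : s * (s + 1) ≤ 0 := mul_nonpos_of_nonpos_of_nonneg hva (by linarith)
      exact div_nonpos_of_nonpos_of_nonneg (by nlinarith) (sq_nonneg d)
    rw [mem_closedBall_zero_iff, ← sq_le_one_iff₀ (norm_nonneg _),
      norm_smul_add_sq_of_inner_eq_zero ha hp', norm_smul, mul_pow, Real.norm_eq_abs, sq_abs]
    nlinarith [sq_nonneg α⁻¹]
  · dsimp only
    rw [map_add, map_smul, map_smul, stretchAlong_self ha,
      stretchAlong_of_inner_eq_zero a α β hp, hv_decomp, smul_smul, smul_smul,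
      div_mul_cancel₀ _ hβ, inv_mul_cancel₀ hα]
    module

end Stretch

theorem LinearMap.adjoint_apply_ne_zero_of_surjective {𝕜 E F : Type*} [RCLike 𝕜]
    [NormedAddCommGroup E] [InnerProductSpace 𝕜 E] [FiniteDimensional 𝕜 E]
    [NormedAddCommGroup F] [InnerProductSpace 𝕜 F] [FiniteDimensional 𝕜 F]
    {T : E →ₗ[𝕜] F} (hT : Function.Surjective T) {g : F} (hg : g ≠ 0) :
    LinearMap.adjoint T g ≠ 0 := by
  intro hg0
  obtain ⟨v, rfl⟩ := hT g
  rw [Ne, ← inner_self_eq_zero (𝕜 := 𝕜), ← LinearMap.adjoint_inner_left, hg0, inner_zero_left] at hg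
  exact hg rfl

theorem addHaar_image_const_add_linearMap {E : Type*} [NormedAddCommGroup E] [NormedSpace ℝ E]
    [MeasurableSpace E] [BorelSpace E] [FiniteDimensional ℝ E] (μ : Measure E)
    [μ.IsAddHaarMeasure] (c : E) (T : E →ₗ[ℝ] E) (s : Set E) :
    μ ((fun v ↦ c + T v) '' s) = ENNReal.ofReal |LinearMap.det T| * μ s := by
  have himage : (fun v ↦ c + T v) '' s = c +ᵥ T '' s := by
    rw [← Set.image_vadd, Set.image_image]
    rfl
  rw [himage, measure_vadd, Measure.addHaar_image_linearMap]

open Real in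
theorem div_sqrt_sq_sub_one_le_exp {x : ℝ} (hx : 1 < x) :
    x / √(x ^ 2 - 1) ≤ exp ((2 * (x ^ 2 - 1))⁻¹) := by
  have hx2 : 0 < x ^ 2 - 1 := by nlinarith
  calc x / √(x ^ 2 - 1) = √(x ^ 2 / (x ^ 2 - 1)) := by
        rw [sqrt_div' _ hx2.le, sqrt_sq (by linarith)]
    _ = √((x ^ 2 - 1)⁻¹ + 1) := by
        congr 1
        field_simp
        ring
    _ ≤ √(exp (x ^ 2 - 1)⁻¹) := sqrt_le_sqrt (add_one_le_exp _)
    _ = exp ((2 * (x ^ 2 - 1))⁻¹) := by rw [← exp_half, mul_comm, mul_inv, ← div_eq_mul_inv]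

open Real in
theorem div_add_one_mul_div_sqrt_pow_le_exp {d : ℕ} (hd : 2 ≤ d) :
    d / (d + 1) * (d / √((d : ℝ) ^ 2 - 1)) ^ (d - 1) ≤ exp (-1 / (2 * ((d : ℝ) + 1))) := by
  have hd' : (2 : ℝ) ≤ d := by exact_mod_cast hd
  have hd2 : (d : ℝ) ^ 2 - 1 ≠ 0 := by nlinarith
  calc (d : ℝ) / (d + 1) * (d / √((d : ℝ) ^ 2 - 1)) ^ (d - 1)
      ≤ exp (-((d : ℝ) + 1)⁻¹) * exp ((2 * ((d : ℝ) ^ 2 - 1))⁻¹) ^ (d - 1) := by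
        gcongr
        · have hd1 : (d : ℝ) / (d + 1) = -((d : ℝ) + 1)⁻¹ + 1 := by
            field_simp
            ring
          rw [hd1]
          exact add_one_le_exp _
        · exact div_sqrt_sq_sub_one_le_exp (by linarith)
    _ = exp (-1 / (2 * ((d : ℝ) + 1))) := by
        rw [← exp_nat_mul, ← exp_add, Nat.cast_sub (by omega)]
        congr 1
        field_simp
        ring

theorem general_ellipsoid_step {d : ℕ} (hd : 2 ≤ d)
    (c : EuclideanSpace ℝ (Fin d))
    (T : EuclideanSpace ℝ (Fin d) →ₗ[ℝ] EuclideanSpace ℝ (Fin d))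
    (hT : Function.Bijective T)
    (g : EuclideanSpace ℝ (Fin d)) (hg : g ≠ 0) :
    ∃ (c' : EuclideanSpace ℝ (Fin d))
      (T' : EuclideanSpace ℝ (Fin d) →ₗ[ℝ] EuclideanSpace ℝ (Fin d)),
      Function.Bijective T' ∧
      ((fun v => c + T v) '' closedBall (0 : EuclideanSpace ℝ (Fin d)) 1) ∩
          {x : EuclideanSpace ℝ (Fin d) | ⟪g, x - c⟫ ≤ 0} ⊆
        (fun v => c' + T' v) '' closedBall (0 : EuclideanSpace ℝ (Fin d)) 1 ∧
      volume ((fun v => c' + T' v) '' closedBall (0 : EuclideanSpace ℝ (Fin d)) 1)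
        ≤ ENNReal.ofReal (Real.exp (-1 / (2 * ((d : ℝ) + 1)))) *
            volume ((fun v => c + T v) '' closedBall (0 : EuclideanSpace ℝ (Fin d)) 1) := by
  have hd1 : (1 : ℝ) < d := by exact_mod_cast hd
  have hd_sq : (0 : ℝ) < d ^ 2 - 1 := by nlinarith
  have hrank : finrank ℝ (EuclideanSpace ℝ (Fin d)) = d - 1 + 1 := by
    rw [finrank_euclideanSpace_fin]
    omega
  set a := (‖LinearMap.adjoint T g‖⁻¹ : ℝ) • LinearMap.adjoint T g
  have ha : ‖a‖ = 1 := norm_smul_inv_norm (LinearMap.adjoint_apply_ne_zero_of_surjective hT.2 hg)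
  set S := stretchAlong a (d / √((d : ℝ) ^ 2 - 1)) (d / (d + 1))
  have hdetS : LinearMap.det S = d / (d + 1) * (d / √((d : ℝ) ^ 2 - 1)) ^ (d - 1) :=
    det_stretchAlong hrank ha _ _
  have hdetS_pos : 0 < LinearMap.det S := by
    rw [hdetS]
    positivity
  have hS : Function.Bijective S :=
    (Module.End.isUnit_iff S).mp ((LinearMap.isUnit_iff_isUnit_det S).mpr hdetS_pos.ne'.isUnit)
  refine ⟨c + T ((-((d : ℝ) + 1)⁻¹) • a), T ∘ₗ S, hT.comp hS, ?_, ?_⟩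
  · rintro _ ⟨⟨v, hv, rfl⟩, hH⟩
    have hva : ⟪a, v⟫ ≤ 0 := by
      rw [real_inner_smul_left, LinearMap.adjoint_inner_left]
      exact mul_nonpos_of_nonneg_of_nonpos (by positivity) (by simpa using hH)
    obtain ⟨w, hw, hvw⟩ := halfBall_subset_image_stretchAlong ha hd1 ⟨hv, hva⟩
    exact ⟨w, hw, by simp [← hvw, S, add_assoc]⟩
  · rw [addHaar_image_const_add_linearMap, addHaar_image_const_add_linearMap, LinearMap.det_comp,
      abs_mul, abs_of_pos hdetS_pos, hdetS, mul_comm |_|, ENNReal.ofReal_mul (by positivity),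
      mul_assoc]
    gcongr
    exact div_add_one_mul_div_sqrt_pow_le_exp hd
end

section
/- Level sets of a Lipschitz convex function on a ball have substantial volume: let f : B̄(x̄, r) → ℝ be convex and M-Lipschitz on the closed ball B̄(x̄,r) ⊂ ℝ^d (M, r > 0), let f* be the minimum of f on B̄(x̄,r), and let α ∈ [0,1]. Then the set {x ∈ B̄(x̄,r) : f(x) ≤ f* + 2αMr} has Lebesgue volume at least α^d times the Lebesgue volume of B̄(x̄,r). -/
/-! Along each segment from `xstar`, convexity makes `f` rise by at most the fraction `α` of its
total rise, which is at most `2 M r` on the ball. Hence the homothety of ratio `α` about `xstar`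
maps the ball into the sublevel set, and it scales Lebesgue measure by `α ^ d`. -/

open Metric MeasureTheory AffineMap Set Module

theorem ConvexOn.map_homothety_le {E : Type*} [AddCommGroup E] [Module ℝ E] {s : Set E}
    {f : E → ℝ} (hf : ConvexOn ℝ s f) {x y : E} (hx : x ∈ s) (hy : y ∈ s) {α : ℝ}
    (hα : α ∈ Icc (0 : ℝ) 1) : f (homothety x α y) ≤ f x + α * (f y - f x) := by
  have h := hf.2 hx hy (sub_nonneg.2 hα.2) hα.1 (sub_add_cancel 1 α)
  rw [homothety_eq_lineMap, lineMap_apply_module]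
  simp only [smul_eq_mul] at h
  linarith

theorem ConvexOn.image_homothety_subset_sublevel {E : Type*} [AddCommGroup E] [Module ℝ E]
    {s : Set E} {f : E → ℝ} (hf : ConvexOn ℝ s f) {x : E} (hx : x ∈ s) {c : ℝ}
    (hc : ∀ y ∈ s, f y ≤ f x + c) {α : ℝ} (hα : α ∈ Icc (0 : ℝ) 1) :
    homothety x α '' s ⊆ {z | z ∈ s ∧ f z ≤ f x + α * c} := by
  rintro _ ⟨y, hy, rfl⟩
  refine ⟨?_, ?_⟩
  · rw [homothety_eq_lineMap]
    exact hf.1.lineMap_mem hx hy hα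
  · calc f (homothety x α y) ≤ f x + α * (f y - f x) := hf.map_homothety_le hx hy hα
      _ ≤ f x + α * c := by nlinarith [hc y hy, hα.1]

theorem le_add_mul_two_mul_of_mem_closedBall {E : Type*} [SeminormedAddCommGroup E]
    {f : E → ℝ} {c : E} {r M : ℝ} (hM : 0 ≤ M)
    (hlip : ∀ x ∈ closedBall c r, ∀ y ∈ closedBall c r, |f x - f y| ≤ M * ‖x - y‖)
    {x y : E} (hx : x ∈ closedBall c r) (hy : y ∈ closedBall c r) :
    f y ≤ f x + M * (2 * r) := by
  have hdist : ‖y - x‖ ≤ 2 * r := by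
    rw [← dist_eq_norm]
    linarith [dist_triangle_right y x c, mem_closedBall.1 hx, mem_closedBall.1 hy]
  have hyx := (abs_le.1 (hlip y hy x hx)).2
  nlinarith

theorem MeasureTheory.Measure.ofReal_pow_finrank_mul_le_of_image_homothety_subset
    {E : Type*} [NormedAddCommGroup E] [NormedSpace ℝ E] [MeasurableSpace E] [BorelSpace E]
    [FiniteDimensional ℝ E] (μ : Measure E) [μ.IsAddHaarMeasure] {x : E} {α : ℝ} (hα : 0 ≤ α)
    {s t : Set E} (h : homothety x α '' s ⊆ t) :
    ENNReal.ofReal (α ^ finrank ℝ E) * μ s ≤ μ t := by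
  rw [← abs_of_nonneg (pow_nonneg hα _), ← Measure.addHaar_image_homothety]
  exact measure_mono h

theorem sublevel_set_volume_lower_bound_general {d : ℕ} (xbar xstar : EuclideanSpace ℝ (Fin d))
    (r M α : ℝ) (hM : 0 < M) (hα : α ∈ Set.Icc (0 : ℝ) 1)
    (f : EuclideanSpace ℝ (Fin d) → ℝ)
    (hconv : ConvexOn ℝ (closedBall xbar r) f)
    (hlip : ∀ x ∈ closedBall xbar r, ∀ y ∈ closedBall xbar r, |f x - f y| ≤ M * ‖x - y‖)
    (hxstar : xstar ∈ closedBall xbar r) :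
    ENNReal.ofReal (α ^ d) * volume (closedBall xbar r)
      ≤ volume {x | x ∈ closedBall xbar r ∧ f x ≤ f xstar + 2 * α * M * r} := by
  have hsub := hconv.image_homothety_subset_sublevel hxstar
    (fun y hy => le_add_mul_two_mul_of_mem_closedBall hM.le hlip hxstar hy) hα
  have hvol := volume.ofReal_pow_finrank_mul_le_of_image_homothety_subset hα.1 hsub
  rw [finrank_euclideanSpace_fin] at hvol
  convert hvol using 6
  ring

theorem sublevel_set_volume_lower_bound {d : ℕ} (xbar xstar : EuclideanSpace ℝ (Fin d))
    (r M α : ℝ) (hr : 0 < r) (hM : 0 < M) (hα : α ∈ Set.Icc (0 : ℝ) 1)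
    (f : EuclideanSpace ℝ (Fin d) → ℝ)
    (hconv : ConvexOn ℝ (closedBall xbar r) f)
    (hlip : ∀ x ∈ closedBall xbar r, ∀ y ∈ closedBall xbar r, |f x - f y| ≤ M * ‖x - y‖)
    (hxstar : xstar ∈ closedBall xbar r)
    (hmin : ∀ y ∈ closedBall xbar r, f xstar ≤ f y) :
    ENNReal.ofReal (α ^ d) * volume (closedBall xbar r)
      ≤ volume {x | x ∈ closedBall xbar r ∧ f x ≤ f xstar + 2 * α * M * r} :=
  sublevel_set_volume_lower_bound_general xbar xstar r M α hM hα f hconv hlip hxstar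
end

section
/- Volume-to-gap bound for cutting-plane methods: let f : B̄(x̄, r) → ℝ be convex and M-Lipschitz on the closed ball B̄(x̄,r) ⊂ ℝ^d (M, r > 0) with minimum value f*, let v ∈ ℝ with v ≥ f*, and let S ⊆ ℝ^d be a measurable set containing {x ∈ B̄(x̄,r) : f(x) < v}. Then min(v − f*, 2Mr) ≤ 2Mr · (vol(S)/vol(B̄(x̄,r)))^(1/d), where vol denotes Lebesgue volume. -/
/-!
Put `m = min (v - f x⋆) (2 M r)` and `t = m / (2 M r) ∈ (0, 1]`. The homothety of center `x⋆` and
ratio `t` maps `B(x̄, r)` onto a ball of radius `t r`. For `z ∈ B(x̄, r)` the Lipschitz bound gives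
`f z < f x⋆ + 2 M r`, and convexity on the segment `[x⋆, z]` scales this excess by `t`, so
`f < f x⋆ + m ≤ v` on the small ball. Hence `S` contains a ball of volume `tᵈ · vol B(x̄, r)`.
-/

open Metric MeasureTheory Module

section ConvexLipschitz

variable {E : Type*} [NormedAddCommGroup E] {f : E → ℝ} {c x₀ x z : E} {r M t : ℝ}

lemma lt_add_of_lipschitz_of_mem_ball
    (hlip : ∀ x ∈ closedBall c r, ∀ y ∈ closedBall c r, |f x - f y| ≤ M * ‖x - y‖)
    (hM : 0 < M) (hx₀ : x₀ ∈ closedBall c r) (hz : z ∈ ball c r) :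
    f z < f x₀ + 2 * M * r := by
  have hdist : ‖z - x₀‖ < 2 * r := by
    rw [← dist_eq_norm, two_mul]
    exact (dist_triangle z c x₀).trans_lt (add_lt_add_of_lt_of_le hz (dist_comm c x₀ ▸ hx₀))
  have hf := (abs_le.mp (hlip z (ball_subset_closedBall hz) x₀ hx₀)).2
  nlinarith

variable [NormedSpace ℝ E]

lemma mem_ball_of_mem_ball_homothety (ht : 0 < t) (hx : x ∈ ball (x₀ + t • (c - x₀)) (t * r)) :
    x₀ + t⁻¹ • (x - x₀) ∈ ball c r := by
  rw [mem_ball, dist_eq_norm] at hx ⊢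
  have hscale : x₀ + t⁻¹ • (x - x₀) - c = t⁻¹ • (x - (x₀ + t • (c - x₀))) := by
    match_scalars <;> field_simp
    ring
  rwa [hscale, norm_smul, norm_inv, Real.norm_of_nonneg ht.le, inv_mul_lt_iff₀ ht]

lemma ConvexOn.ball_homothety_subset_sublevel (hconv : ConvexOn ℝ (closedBall c r) f)
    (hlip : ∀ x ∈ closedBall c r, ∀ y ∈ closedBall c r, |f x - f y| ≤ M * ‖x - y‖)
    (hM : 0 < M) (hx₀ : x₀ ∈ closedBall c r) (ht0 : 0 < t) (ht1 : t ≤ 1) :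
    ball (x₀ + t • (c - x₀)) (t * r) ⊆ {x | x ∈ closedBall c r ∧ f x < f x₀ + 2 * M * r * t} := by
  intro x hx
  set z := x₀ + t⁻¹ • (x - x₀)
  have hz : z ∈ ball c r := mem_ball_of_mem_ball_homothety ht0 hx
  have hxz : x = (1 - t) • x₀ + t • z := by
    rw [smul_add, smul_smul, mul_inv_cancel₀ ht0.ne', one_smul]
    module
  have hsum : 1 - t + t = 1 := by ring
  have hz' := ball_subset_closedBall hz
  refine ⟨hxz ▸ convex_closedBall c r hx₀ hz' (by linarith) ht0.le hsum, ?_⟩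
  have hfz := lt_add_of_lipschitz_of_mem_ball hlip hM hx₀ hz
  calc f x ≤ (1 - t) * f x₀ + t * f z := hxz ▸ hconv.2 hx₀ hz' (by linarith) ht0.le hsum
    _ < (1 - t) * f x₀ + t * (f x₀ + 2 * M * r) := by gcongr
    _ = f x₀ + 2 * M * r * t := by ring

end ConvexLipschitz

lemma ENNReal.ofReal_le_rpow_one_div_of_pow_mul_le {a b : ENNReal} {t : ℝ} {n : ℕ} (hn : n ≠ 0)
    (ht : 0 ≤ t) (hb0 : b ≠ 0) (hb : b ≠ ⊤) (h : ENNReal.ofReal (t ^ n) * b ≤ a) :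
    ENNReal.ofReal t ≤ (a / b) ^ ((1 : ℝ) / n) := by
  rwa [one_div, ENNReal.le_rpow_inv_iff (by positivity), ENNReal.rpow_natCast,
    ← ENNReal.ofReal_pow ht, ENNReal.le_div_iff_mul_le (Or.inl hb0) (Or.inl hb)]

section AddHaar

variable {E : Type*} [NormedAddCommGroup E] [NormedSpace ℝ E] [MeasurableSpace E] [BorelSpace E]
  [FiniteDimensional ℝ E] [Nontrivial E] (μ : Measure E) [μ.IsAddHaarMeasure]

lemma addHaar_ball_mul_eq_pow_mul_closedBall (x c : E) {t : ℝ} (ht : 0 ≤ t) (r : ℝ) :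
    μ (ball x (t * r)) = ENNReal.ofReal (t ^ finrank ℝ E) * μ (closedBall c r) := by
  rw [Measure.addHaar_ball_mul μ x ht, Measure.addHaar_closedBall_eq_addHaar_ball,
    Measure.addHaar_ball_center μ c]

lemma ofReal_le_rpow_measure_div_closedBall {S : Set E} {x c : E} {r t : ℝ} (hr : 0 < r)
    (ht : 0 ≤ t) (hS : ball x (t * r) ⊆ S) :
    ENNReal.ofReal t ≤ (μ S / μ (closedBall c r)) ^ ((1 : ℝ) / finrank ℝ E) :=
  ENNReal.ofReal_le_rpow_one_div_of_pow_mul_le finrank_pos.ne' ht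
    (measure_closedBall_pos μ c hr).ne' measure_closedBall_lt_top.ne
    ((addHaar_ball_mul_eq_pow_mul_closedBall μ x c ht r).symm.trans_le (measure_mono hS))

end AddHaar

theorem volume_to_gap_bound_general {d : ℕ} (xbar xstar : EuclideanSpace ℝ (Fin d))
    (r M v : ℝ) (hr : 0 < r) (hM : 0 < M)
    (f : EuclideanSpace ℝ (Fin d) → ℝ)
    (hconv : ConvexOn ℝ (closedBall xbar r) f)
    (hlip : ∀ x ∈ closedBall xbar r, ∀ y ∈ closedBall xbar r, |f x - f y| ≤ M * ‖x - y‖)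
    (hxstar : xstar ∈ closedBall xbar r)
    (S : Set (EuclideanSpace ℝ (Fin d)))
    (hS : {x | x ∈ closedBall xbar r ∧ f x < v} ⊆ S) :
    ENNReal.ofReal (min (v - f xstar) (2 * M * r))
      ≤ ENNReal.ofReal (2 * M * r) *
          (volume S / volume (closedBall xbar r)) ^ ((1 : ℝ) / d) := by
  rcases Nat.eq_zero_or_pos d with rfl | hd
  · simp
  have : NeZero d := ⟨hd.ne'⟩
  set m := min (v - f xstar) (2 * M * r)
  rcases le_or_gt m 0 with hm0 | hm0
  · simp [ENNReal.ofReal_eq_zero.mpr hm0]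
  have h2Mr : 0 < 2 * M * r := by positivity
  set t := m / (2 * M * r)
  have ht0 : 0 < t := div_pos hm0 h2Mr
  have htm : 2 * M * r * t = m := mul_div_cancel₀ m h2Mr.ne'
  have hsub : ball (xstar + t • (xbar - xstar)) (t * r) ⊆ S := by
    refine (hconv.ball_homothety_subset_sublevel hlip hM hxstar ht0
      ((div_le_one h2Mr).mpr (min_le_right _ _))).trans (subset_trans ?_ hS)
    rintro x ⟨hx, hfx⟩
    exact ⟨hx, by linarith [min_le_left (v - f xstar) (2 * M * r)]⟩
  have hvol := ofReal_le_rpow_measure_div_closedBall volume (c := xbar) hr ht0.le hsub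
  rw [finrank_euclideanSpace_fin] at hvol
  calc ENNReal.ofReal m = ENNReal.ofReal (2 * M * r) * ENNReal.ofReal t := by
        rw [← ENNReal.ofReal_mul h2Mr.le, htm]
    _ ≤ _ := by gcongr

theorem volume_to_gap_bound {d : ℕ} (xbar xstar : EuclideanSpace ℝ (Fin d))
    (r M v : ℝ) (hr : 0 < r) (hM : 0 < M)
    (f : EuclideanSpace ℝ (Fin d) → ℝ)
    (hconv : ConvexOn ℝ (closedBall xbar r) f)
    (hlip : ∀ x ∈ closedBall xbar r, ∀ y ∈ closedBall xbar r, |f x - f y| ≤ M * ‖x - y‖)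
    (hxstar : xstar ∈ closedBall xbar r)
    (hmin : ∀ y ∈ closedBall xbar r, f xstar ≤ f y)
    (hv : f xstar ≤ v)
    (S : Set (EuclideanSpace ℝ (Fin d))) (hSmeas : MeasurableSet S)
    (hS : {x | x ∈ closedBall xbar r ∧ f x < v} ⊆ S) :
    ENNReal.ofReal (min (v - f xstar) (2 * M * r))
      ≤ ENNReal.ofReal (2 * M * r) *
          (volume S / volume (closedBall xbar r)) ^ ((1 : ℝ) / d) :=
  volume_to_gap_bound_general xbar xstar r M v hr hM f hconv hlip hxstar S hS
end

section
/- One-step progress of the ball-restricted subproblem in the Klein model: let 0 < R ≤ 2r, let D = {y in the open unit ball of ℝ^d : d_K(0,y) ≤ r}, and let f : D → ℝ be geodesically convex on D. Let f* = min over D of f and let x ∈ D. Then inf{f(y) : y ∈ D, d_K(x,y) ≤ R} − f* ≤ (1 − R/(2r))·(f(x) − f*). -/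
open scoped RealInnerProductSpace
open Metric MeasureTheory

/-- The Klein ball of radius `r` about the origin (inside the open unit ball). -/
noncomputable def kleinBall (d : ℕ) (r : ℝ) : Set (EuclideanSpace ℝ (Fin d)) :=
  {y | ‖y‖ < 1 ∧ kleinDist 0 y ≤ r}

/-- Geodesic convexity in the Beltrami–Klein model: convexity along straight chords,
parameterized by Klein arclength. -/
def GeodesicallyConvexOn {d : ℕ} (D : Set (EuclideanSpace ℝ (Fin d)))
    (f : EuclideanSpace ℝ (Fin d) → ℝ) : Prop :=
  ∀ x ∈ D, ∀ y ∈ D, ∀ t ∈ Set.Icc (0 : ℝ) 1,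
    f ((1 - t) • x + t • y) * kleinDist x y ≤
      (kleinDist x y - kleinDist x ((1 - t) • x + t • y)) * f x +
        kleinDist x ((1 - t) • x + t • y) * f y


/-!
Let `L = d_K(x, x⋆)`. If `L ≤ R`, the minimiser itself is admissible. Otherwise, by continuity
the chord from `x` to `x⋆` has a point `z` with `d_K(x, z) = R`; it stays in `D`, a Euclidean
ball, and geodesic convexity along the chord gives `f z - f⋆ ≤ (1 - R / L) (f x - f⋆)`.
Finally `L ≤ 2r`: `d_K(0, y) = artanh ‖y‖`, and by the addition formula for `cosh`,
`cosh (artanh ‖x‖ + artanh ‖y‖) = (1 + ‖x‖ ‖y‖) / (√(1 - ‖x‖²) √(1 - ‖y‖²))`,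
which bounds the Klein expression for `cosh d_K(x, y)` by Cauchy–Schwarz.
-/

open Real

noncomputable def kleinCosh {d : ℕ} (x y : EuclideanSpace ℝ (Fin d)) : ℝ :=
  (1 - ⟪x, y⟫) / (√(1 - ‖x‖ ^ 2) * √(1 - ‖y‖ ^ 2))

theorem continuousOn_arcosh_Ioi : ContinuousOn arcosh (Set.Ioi 0) :=
  (continuousOn_id.add ((continuousOn_id.pow 2).sub continuousOn_const).sqrt).log
    fun _ hu => (add_pos_of_pos_of_nonneg hu (sqrt_nonneg _)).ne'

theorem one_sub_norm_sq_pos {E : Type*} [SeminormedAddCommGroup E] {x : E} (hx : ‖x‖ < 1) :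
    0 < 1 - ‖x‖ ^ 2 :=
  sub_pos.2 (pow_lt_one₀ (norm_nonneg x) hx two_ne_zero)

theorem cosh_artanh_add {a b : ℝ} (ha : a ∈ Set.Ioo (-1) 1) (hb : b ∈ Set.Ioo (-1) 1) :
    cosh (artanh a + artanh b) = (1 + a * b) / (√(1 - a ^ 2) * √(1 - b ^ 2)) := by
  rw [cosh_add, cosh_artanh ha, cosh_artanh hb, sinh_artanh ha, sinh_artanh hb]
  ring

section Klein

variable {d : ℕ} {x y : EuclideanSpace ℝ (Fin d)}

theorem kleinDist_eq_arcosh_kleinCosh : kleinDist x y = arcosh (kleinCosh x y) := rfl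

theorem kleinCosh_pos (hx : ‖x‖ < 1) (hy : ‖y‖ < 1) : 0 < kleinCosh x y := by
  have hinner : ⟪x, y⟫ < 1 := (real_inner_le_norm x y).trans_lt
    (mul_lt_one_of_nonneg_of_lt_one_left (norm_nonneg x) hx hy.le)
  exact div_pos (sub_pos.2 hinner)
    (mul_pos (sqrt_pos.2 (one_sub_norm_sq_pos hx)) (sqrt_pos.2 (one_sub_norm_sq_pos hy)))

theorem continuousOn_kleinCosh (hx : ‖x‖ < 1) :
    ContinuousOn (kleinCosh x) (Metric.ball 0 1) := by
  refine (continuous_const.sub (continuous_const.inner continuous_id)).continuousOn.div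
    (continuousOn_const.mul (continuous_const.sub (continuous_norm.pow 2)).sqrt.continuousOn)
    fun y hy => ?_
  exact (mul_pos (sqrt_pos.2 (one_sub_norm_sq_pos hx))
    (sqrt_pos.2 (one_sub_norm_sq_pos (mem_ball_zero_iff.1 hy)))).ne'

theorem continuousOn_kleinDist (hx : ‖x‖ < 1) : ContinuousOn (kleinDist x) (Metric.ball 0 1) :=
  continuousOn_arcosh_Ioi.comp (continuousOn_kleinCosh hx)
    fun _ hy => kleinCosh_pos hx (mem_ball_zero_iff.1 hy)

theorem kleinDist_self (hx : ‖x‖ < 1) : kleinDist x x = 0 := by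
  rw [kleinDist_eq_arcosh_kleinCosh, kleinCosh, real_inner_self_eq_norm_sq,
    mul_self_sqrt (one_sub_norm_sq_pos hx).le, div_self (one_sub_norm_sq_pos hx).ne', arcosh_zero]

theorem kleinDist_zero_left (hy : ‖y‖ < 1) : kleinDist 0 y = artanh ‖y‖ := by
  have hy' : ‖y‖ ∈ Set.Ioo (-1) 1 := ⟨by linarith [norm_nonneg y], hy⟩
  rw [kleinDist_eq_arcosh_kleinCosh, ← arcosh_cosh (artanh_nonneg (norm_nonneg y)),
    cosh_artanh hy']
  simp [kleinCosh]

theorem kleinDist_le_artanh_add (hx : ‖x‖ < 1) (hy : ‖y‖ < 1) :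
    kleinDist x y ≤ artanh ‖x‖ + artanh ‖y‖ := by
  have hx' : ‖x‖ ∈ Set.Ioo (-1) 1 := ⟨by linarith [norm_nonneg x], hx⟩
  have hy' : ‖y‖ ∈ Set.Ioo (-1) 1 := ⟨by linarith [norm_nonneg y], hy⟩
  have hsum := add_nonneg (artanh_nonneg (norm_nonneg x)) (artanh_nonneg (norm_nonneg y))
  rw [kleinDist_eq_arcosh_kleinCosh, ← arcosh_cosh hsum,
    arcosh_le_arcosh (kleinCosh_pos hx hy) (cosh_pos _), cosh_artanh_add hx' hy', kleinCosh]
  gcongr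
  linarith [neg_le_of_abs_le (abs_real_inner_le_norm x y)]

theorem mem_kleinBall_of_norm_le {r : ℝ} (hy : y ∈ kleinBall d r) (hxy : ‖x‖ ≤ ‖y‖) :
    x ∈ kleinBall d r := by
  have hx : ‖x‖ < 1 := hxy.trans_lt hy.1
  refine ⟨hx, le_trans ?_ hy.2⟩
  rw [kleinDist_zero_left hx, kleinDist_zero_left hy.1]
  exact artanh_le_artanh (by linarith [norm_nonneg x]) hy.1 hxy

theorem convex_kleinBall (d : ℕ) (r : ℝ) : Convex ℝ (kleinBall d r) := by
  intro y hy z hz a b ha hb hab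
  have hmax : ‖a • y + b • z‖ ≤ max ‖y‖ ‖z‖ := by
    simpa using convex_closedBall (0 : EuclideanSpace ℝ (Fin d)) (max ‖y‖ ‖z‖)
      (by simp) (by simp) ha hb hab
  rcases max_choice ‖y‖ ‖z‖ with h | h <;> rw [h] at hmax
  exacts [mem_kleinBall_of_norm_le hy hmax, mem_kleinBall_of_norm_le hz hmax]

theorem kleinDist_le_two_mul {r : ℝ} (hx : x ∈ kleinBall d r) (hy : y ∈ kleinBall d r) :
    kleinDist x y ≤ 2 * r := by
  have h := kleinDist_le_artanh_add hx.1 hy.1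
  rw [← kleinDist_zero_left hx.1, ← kleinDist_zero_left hy.1] at h
  linarith [hx.2, hy.2]

theorem exists_kleinDist_segment_eq (hx : ‖x‖ < 1) (hy : ‖y‖ < 1) {R : ℝ} (hR : 0 ≤ R)
    (hRxy : R ≤ kleinDist x y) :
    ∃ t ∈ Set.Icc (0 : ℝ) 1, kleinDist x ((1 - t) • x + t • y) = R := by
  have hseg : ContinuousOn (fun t : ℝ => kleinDist x ((1 - t) • x + t • y)) (Set.Icc 0 1) :=
    (continuousOn_kleinDist hx).comp (by fun_prop) fun t ht =>
      convex_ball (0 : EuclideanSpace ℝ (Fin d)) 1 (mem_ball_zero_iff.2 hx)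
        (mem_ball_zero_iff.2 hy) (sub_nonneg.2 ht.2) ht.1 (sub_add_cancel 1 t)
  exact intermediate_value_Icc zero_le_one hseg
    (by simpa [kleinDist_self hx] using ⟨hR, hRxy⟩)

end Klein

theorem GeodesicallyConvexOn.sub_le_mul_sub {d : ℕ} {D : Set (EuclideanSpace ℝ (Fin d))}
    {f : EuclideanSpace ℝ (Fin d) → ℝ} (hf : GeodesicallyConvexOn D f)
    {x y : EuclideanSpace ℝ (Fin d)} (hx : x ∈ D) (hy : y ∈ D) {t : ℝ} (ht : t ∈ Set.Icc 0 1)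
    (hxy : 0 < kleinDist x y) :
    f ((1 - t) • x + t • y) - f y ≤
      (1 - kleinDist x ((1 - t) • x + t • y) / kleinDist x y) * (f x - f y) := by
  have h := hf x hx y hy t ht
  rw [← mul_le_mul_iff_of_pos_right hxy]
  field_simp
  linarith

theorem subproblem_one_step_progress {d : ℕ} (r R : ℝ) (hR : 0 < R) (hRr : R ≤ 2 * r)
    (f : EuclideanSpace ℝ (Fin d) → ℝ)
    (hconv : GeodesicallyConvexOn (kleinBall d r) f)
    (xstar : EuclideanSpace ℝ (Fin d)) (hxstar : xstar ∈ kleinBall d r)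
    (hmin : ∀ y ∈ kleinBall d r, f xstar ≤ f y)
    (x : EuclideanSpace ℝ (Fin d)) (hx : x ∈ kleinBall d r) :
    sInf (f '' {y ∈ kleinBall d r | kleinDist x y ≤ R}) - f xstar
      ≤ (1 - R / (2 * r)) * (f x - f xstar) := by
  have hbdd : BddBelow (f '' {y ∈ kleinBall d r | kleinDist x y ≤ R}) :=
    ⟨f xstar, by rintro _ ⟨y, ⟨hy, -⟩, rfl⟩; exact hmin y hy⟩
  have hgap : 0 ≤ f x - f xstar := sub_nonneg.2 (hmin x hx)
  have hfactor : 0 ≤ 1 - R / (2 * r) := sub_nonneg.2 ((div_le_one (hR.trans_le hRr)).2 hRr)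
  rcases le_or_gt (kleinDist x xstar) R with hnear | hfar
  · have h := csInf_le hbdd ⟨xstar, ⟨hxstar, hnear⟩, rfl⟩
    linarith [mul_nonneg hfactor hgap]
  obtain ⟨t, ht, hdist⟩ := exists_kleinDist_segment_eq hx.1 hxstar.1 hR.le hfar.le
  have hz : (1 - t) • x + t • xstar ∈ kleinBall d r :=
    convex_kleinBall d r hx hxstar (sub_nonneg.2 ht.2) ht.1 (sub_add_cancel 1 t)
  calc sInf (f '' {y ∈ kleinBall d r | kleinDist x y ≤ R}) - f xstar
      ≤ f ((1 - t) • x + t • xstar) - f xstar := by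
        gcongr
        exact csInf_le hbdd ⟨_, ⟨hz, hdist.le⟩, rfl⟩
    _ ≤ (1 - R / kleinDist x xstar) * (f x - f xstar) :=
        hdist ▸ hconv.sub_le_mul_sub hx hxstar ht (hR.trans hfar)
    _ ≤ (1 - R / (2 * r)) * (f x - f xstar) := by
        gcongr
        exacts [hR.trans hfar, kleinDist_le_two_mul hx hxstar]
end
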